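/- arXiv:1909.12477 — 2 statements merged into one kernel-verified Lean document; each statement's English description precedes it below -/
import Mathlib

section
/- Let φ ∈ C⁴(ℝⁿ) and a ∈ ℝ. For every ψ ∈ C_c^∞(ℝⁿ), ‖(Δ+a)*_φ ψ‖²_φ = ‖(Δ+a)ψ‖²_φ + ⟨ψ, Δ(Δ*_φ ψ) − Δ*_φ(Δψ)⟩_φ, i.e., the squared weighted norm of the formal adjoint applied to ψ equals the squared weighted norm of (Δ+a)ψ plus the commutator term. -/
open MeasureTheory Real

noncomputable def lap {n : ℕ} (f : EuclideanSpace ℝ (Fin n) → ℝ)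
    (x : EuclideanSpace ℝ (Fin n)) : ℝ :=
  ∑ i : Fin n, fderiv ℝ (fun y => fderiv ℝ f y (EuclideanSpace.single i 1)) x
    (EuclideanSpace.single i 1)

/-- The formal adjoint `Δ*_φ ψ = e^φ Δ(ψ e^{-φ})`. -/
noncomputable def lapAdj {n : ℕ} (φ ψ : EuclideanSpace ℝ (Fin n) → ℝ)
    (x : EuclideanSpace ℝ (Fin n)) : ℝ :=
  Real.exp (φ x) * lap (fun y => ψ y * Real.exp (-(φ y))) x

section Aux

variable {n : ℕ}

/-- directional derivative in coordinate direction -/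
private noncomputable def Dd (i : Fin n) (f : EuclideanSpace ℝ (Fin n) → ℝ)
    (x : EuclideanSpace ℝ (Fin n)) : ℝ :=
  fderiv ℝ f x (EuclideanSpace.single i 1)

private lemma Dd_contDiff {m : WithTop ℕ∞} {f : EuclideanSpace ℝ (Fin n) → ℝ}
    (hf : ContDiff ℝ (m + 1) f) (i : Fin n) : ContDiff ℝ m (Dd i f) :=
  (hf.fderiv_right le_rfl).clm_apply contDiff_const

private lemma lap_eq (f : EuclideanSpace ℝ (Fin n) → ℝ) :
    lap f = fun x => ∑ i : Fin n, Dd i (Dd i f) x := rfl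

private lemma lap_contDiff {m : WithTop ℕ∞} {f : EuclideanSpace ℝ (Fin n) → ℝ}
    (hf : ContDiff ℝ (m + 2) f) : ContDiff ℝ m (lap f) := by
  rw [lap_eq]
  apply ContDiff.sum
  intro i _
  have h1 : ContDiff ℝ (m + 1) (Dd i f) := by
    apply Dd_contDiff _ i
    have e : m + 1 + 1 = m + 2 := by rw [add_assoc]; norm_num
    rw [e]; exact hf
  exact Dd_contDiff h1 i

private lemma Dd_support {f : EuclideanSpace ℝ (Fin n) → ℝ} (i : Fin n) :
    Function.support (Dd i f) ⊆ tsupport f := by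
  intro x hx
  have : fderiv ℝ f x ≠ 0 := by
    intro h
    apply hx
    simp [Dd, h]
  exact support_fderiv_subset ℝ this

private lemma Dd_hasCompactSupport {f : EuclideanSpace ℝ (Fin n) → ℝ}
    (hf : HasCompactSupport f) (i : Fin n) : HasCompactSupport (Dd i f) :=
  HasCompactSupport.intro hf fun x hx =>
    Function.notMem_support.mp fun hs => hx (Dd_support i hs)

private lemma lap_hasCompactSupport {f : EuclideanSpace ℝ (Fin n) → ℝ}
    (hf : HasCompactSupport f) : HasCompactSupport (lap f) := by
  rw [lap_eq]
  apply HasCompactSupport.intro hf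
  intro x hx
  apply Finset.sum_eq_zero
  intro i _
  by_contra h
  have h1 : x ∈ tsupport (Dd i f) := Dd_support i h
  have h2 : tsupport (Dd i f) ⊆ tsupport f :=
    closure_minimal (Dd_support i) (isClosed_tsupport f)
  exact hx (h2 h1)

private lemma integrable_mul_cs {f g : EuclideanSpace ℝ (Fin n) → ℝ}
    (hf : Continuous f) (hg : Continuous g) (h : HasCompactSupport f) :
    Integrable (fun x => f x * g x) :=
  (hf.mul hg).integrable_of_hasCompactSupport (h.mul_right)

private lemma integrable_mul_cs' {f g : EuclideanSpace ℝ (Fin n) → ℝ}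
    (hf : Continuous f) (hg : Continuous g) (h : HasCompactSupport g) :
    Integrable (fun x => f x * g x) :=
  (hf.mul hg).integrable_of_hasCompactSupport (h.mul_left)

/-- Green's identity: `∫ u Δv = ∫ Δu v` for `u` compactly supported, `u, v ∈ C²`. -/
private lemma green {u v : EuclideanSpace ℝ (Fin n) → ℝ}
    (hu : ContDiff ℝ 2 u) (hv : ContDiff ℝ 2 v) (hc : HasCompactSupport u) :
    ∫ x, u x * lap v x = ∫ x, lap u x * v x := by
  have hu1 : Differentiable ℝ u := hu.differentiable (by norm_num)
  have hv1 : Differentiable ℝ v := hv.differentiable (by norm_num)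
  have hDu : ∀ i, ContDiff ℝ 1 (Dd i u) := fun i =>
    Dd_contDiff (hu.of_le (by norm_num)) i
  have hDv : ∀ i, ContDiff ℝ 1 (Dd i v) := fun i =>
    Dd_contDiff (hv.of_le (by norm_num)) i
  have hDDu : ∀ i, Continuous (Dd i (Dd i u)) := fun i =>
    (Dd_contDiff (m := 0) (by simpa using hDu i) i).continuous
  have hDDv : ∀ i, Continuous (Dd i (Dd i v)) := fun i =>
    (Dd_contDiff (m := 0) (by simpa using hDv i) i).continuous
  have key : ∀ i : Fin n, ∫ x, u x * Dd i (Dd i v) x = ∫ x, Dd i (Dd i u) x * v x := by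
    intro i
    have e1 : ∫ x, u x * Dd i (Dd i v) x = - ∫ x, Dd i u x * Dd i v x := by
      apply integral_mul_fderiv_eq_neg_fderiv_mul_of_integrable
      · exact integrable_mul_cs ((hDu i).continuous) ((hDv i).continuous)
          (Dd_hasCompactSupport hc i)
      · exact integrable_mul_cs hu.continuous (hDDv i) hc
      · exact integrable_mul_cs hu.continuous ((hDv i).continuous) hc
      · exact fun x _ => hu1 x
      · exact fun x _ => (hDv i).differentiable one_ne_zero x
    have e2 : ∫ x, v x * Dd i (Dd i u) x = - ∫ x, Dd i v x * Dd i u x := by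
      apply integral_mul_fderiv_eq_neg_fderiv_mul_of_integrable
      · exact integrable_mul_cs' ((hDv i).continuous) ((hDu i).continuous)
          (Dd_hasCompactSupport hc i)
      · exact integrable_mul_cs' hv.continuous (hDDu i)
          (Dd_hasCompactSupport (Dd_hasCompactSupport hc i) i)
      · exact integrable_mul_cs' hv.continuous ((hDu i).continuous) (Dd_hasCompactSupport hc i)
      · exact fun x _ => hv1 x
      · exact fun x _ => (hDu i).differentiable one_ne_zero x
    have e3 : ∫ x, Dd i v x * Dd i u x = ∫ x, Dd i u x * Dd i v x := by
      congr 1; ext x; ring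
    have e4 : ∫ x, v x * Dd i (Dd i u) x = ∫ x, Dd i (Dd i u) x * v x := by
      congr 1; ext x; ring
    rw [e1, ← e4, e2, e3]
  calc ∫ x, u x * lap v x = ∫ x, ∑ i : Fin n, u x * Dd i (Dd i v) x := by
        rw [lap_eq]; congr 1; ext x; rw [Finset.mul_sum]
    _ = ∑ i : Fin n, ∫ x, u x * Dd i (Dd i v) x := by
        apply integral_finset_sum
        intro i _
        exact integrable_mul_cs hu.continuous (hDDv i) hc
    _ = ∑ i : Fin n, ∫ x, Dd i (Dd i u) x * v x := by
        exact Finset.sum_congr rfl fun i _ => key i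
    _ = ∫ x, ∑ i : Fin n, Dd i (Dd i u) x * v x := by
        refine (integral_finset_sum _ fun i _ => ?_).symm
        exact integrable_mul_cs (hDDu i) hv.continuous
          (Dd_hasCompactSupport (Dd_hasCompactSupport hc i) i)
    _ = ∫ x, lap u x * v x := by
        rw [lap_eq]; congr 1; ext x; rw [Finset.sum_mul]

end Aux

theorem stmt5 (n : ℕ) (φ : EuclideanSpace ℝ (Fin n) → ℝ)
    (hφ : ContDiff ℝ 4 φ) (a : ℝ)
    (ψ : EuclideanSpace ℝ (Fin n) → ℝ) (hψ : ContDiff ℝ (⊤ : ℕ∞) ψ)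
    (hψc : HasCompactSupport ψ) :
    ∫ x, (lapAdj φ ψ x + a * ψ x) ^ 2 * Real.exp (-(φ x)) =
      (∫ x, (lap ψ x + a * ψ x) ^ 2 * Real.exp (-(φ x))) +
        ∫ x, ψ x * (lap (lapAdj φ ψ) x - lapAdj φ (lap ψ) x) * Real.exp (-(φ x)) := by
  classical
  set w : EuclideanSpace ℝ (Fin n) → ℝ := fun x => Real.exp (-(φ x)) with hw_def
  have hw : ContDiff ℝ 4 w := Real.contDiff_exp.comp hφ.neg
  have hw_pos : ∀ x, Real.exp (φ x) * w x = 1 := by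
    intro x; rw [hw_def]; rw [← Real.exp_add]; simp
  -- ψ * w
  have hψ2 : ContDiff ℝ 4 ψ := hψ.of_le (by exact WithTop.coe_le_coe.mpr le_top)
  have hψw : ContDiff ℝ 4 (fun x => ψ x * w x) := hψ2.mul hw
  have hψwc : HasCompactSupport (fun x => ψ x * w x) := hψc.mul_right
  -- A = lapAdj φ ψ
  set A : EuclideanSpace ℝ (Fin n) → ℝ := lapAdj φ ψ with hA_def
  have hlapψw : ContDiff ℝ 2 (lap fun x => ψ x * w x) :=
    lap_contDiff (hψw.of_le (by norm_num))
  have hA : ContDiff ℝ 2 A := by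
    have : ContDiff ℝ 2 (fun x => Real.exp (φ x)) :=
      Real.contDiff_exp.comp (hφ.of_le (by norm_num))
    exact this.mul hlapψw
  have hAc : HasCompactSupport A := by
    have : HasCompactSupport (lap fun x => ψ x * w x) := lap_hasCompactSupport hψwc
    exact this.mul_left
  have hAw : ∀ x, A x * w x = lap (fun y => ψ y * w y) x := by
    intro x
    have : A x = Real.exp (φ x) * lap (fun y => ψ y * w y) x := rfl
    rw [this, mul_comm (Real.exp (φ x)), mul_assoc, hw_pos x, mul_one]
  -- L = lap ψ
  set L : EuclideanSpace ℝ (Fin n) → ℝ := lap ψ with hL_def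
  have hL : ContDiff ℝ 2 L := lap_contDiff (hψ.of_le (by exact WithTop.coe_le_coe.mpr le_top))
  have hLc : HasCompactSupport L := lap_hasCompactSupport hψc
  have hLw : ContDiff ℝ 2 (fun x => L x * w x) := hL.mul (hw.of_le (by norm_num))
  have hLwc : HasCompactSupport (fun x => L x * w x) := hLc.mul_right
  -- continuity facts
  have hwc : Continuous w := hw.continuous
  have hψcont : Continuous ψ := hψ.continuous
  have hAcont : Continuous A := hA.continuous
  have hLcont : Continuous L := hL.continuous
  have hlapA : ContDiff ℝ 0 (lap A) := lap_contDiff (hA.of_le (by norm_num))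
  have hlapAc : HasCompactSupport (lap A) := lap_hasCompactSupport hAc
  -- lapAdj φ L
  have hadjL : ∀ x, lapAdj φ L x = Real.exp (φ x) * lap (fun y => L y * w y) x := fun x => rfl
  have hlapLw : ContDiff ℝ 0 (lap fun y => L y * w y) :=
    lap_contDiff (hLw.of_le (by norm_num))
  -- Identity 1 : ∫ ψ (lap A) w = ∫ A² w
  have I1 : ∫ x, ψ x * lap A x * w x = ∫ x, A x * A x * w x := by
    have g := green (u := fun x => ψ x * w x) (v := A) (hψw.of_le (by norm_num)) hA hψwc
    calc ∫ x, ψ x * lap A x * w x = ∫ x, (ψ x * w x) * lap A x := by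
          congr 1; ext x; ring
      _ = ∫ x, lap (fun y => ψ y * w y) x * A x := g
      _ = ∫ x, A x * A x * w x := by
          congr 1; ext x; rw [← hAw x]; ring
  -- Identity 2 : ∫ ψ (lapAdj φ L) w = ∫ L² w
  have I2 : ∫ x, ψ x * lapAdj φ L x * w x = ∫ x, L x * L x * w x := by
    have g := green (u := fun x => L x * w x) (v := ψ) hLw (hψ.of_le (by exact WithTop.coe_le_coe.mpr le_top)) hLwc
    calc ∫ x, ψ x * lapAdj φ L x * w x
        = ∫ x, ψ x * lap (fun y => L y * w y) x := by
          congr 1; ext x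
          have h : lapAdj φ L x * w x = lap (fun y => L y * w y) x := by
            rw [hadjL x, mul_comm (Real.exp (φ x)), mul_assoc, hw_pos x, mul_one]
          rw [mul_assoc, h]
      _ = ∫ x, lap (fun y => L y * w y) x * ψ x := by congr 1; ext x; ring
      _ = ∫ x, (L x * w x) * lap ψ x := g.symm
      _ = ∫ x, L x * L x * w x := by congr 1; ext x; rw [← hL_def]; ring
  -- Identity 3 : ∫ A ψ w = ∫ L ψ w
  have I3 : ∫ x, A x * ψ x * w x = ∫ x, L x * ψ x * w x := by
    have g := green (u := fun x => ψ x * w x) (v := ψ) (hψw.of_le (by norm_num))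
      (hψ.of_le (by exact WithTop.coe_le_coe.mpr le_top)) hψwc
    calc ∫ x, A x * ψ x * w x = ∫ x, lap (fun y => ψ y * w y) x * ψ x := by
          congr 1; ext x; rw [← hAw x]; ring
      _ = ∫ x, (ψ x * w x) * lap ψ x := g.symm
      _ = ∫ x, L x * ψ x * w x := by congr 1; ext x; rw [← hL_def]; ring
  -- Integrability of all pieces
  have iAA : Integrable (fun x => A x * A x * w x) :=
    integrable_mul_cs (hAcont.mul hAcont) hwc (hAc.mul_right)
  have iAψ : Integrable (fun x => A x * ψ x * w x) :=
    integrable_mul_cs (hAcont.mul hψcont) hwc (hAc.mul_right)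
  have iψψ : Integrable (fun x => ψ x * ψ x * w x) :=
    integrable_mul_cs (hψcont.mul hψcont) hwc (hψc.mul_right)
  have iLL : Integrable (fun x => L x * L x * w x) :=
    integrable_mul_cs (hLcont.mul hLcont) hwc (hLc.mul_right)
  have iLψ : Integrable (fun x => L x * ψ x * w x) :=
    integrable_mul_cs (hLcont.mul hψcont) hwc (hLc.mul_right)
  have iψlapA : Integrable (fun x => ψ x * lap A x * w x) :=
    integrable_mul_cs (hψcont.mul hlapA.continuous) hwc (hψc.mul_right)
  have iψadjL : Integrable (fun x => ψ x * lapAdj φ L x * w x) := by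
    have hcont : Continuous (lapAdj φ L) := by
      have : Continuous (fun x => Real.exp (φ x)) := Real.continuous_exp.comp hφ.continuous
      exact this.mul hlapLw.continuous
    exact integrable_mul_cs (hψcont.mul hcont) hwc (hψc.mul_right)
  -- Expand LHS
  have expandL : ∫ x, (A x + a * ψ x) ^ 2 * w x =
      (∫ x, A x * A x * w x) + ((2*a) * (∫ x, A x * ψ x * w x)
        + (a*a) * ∫ x, ψ x * ψ x * w x) := by
    have h : (fun x => (A x + a * ψ x) ^ 2 * w x)
        = fun x => A x * A x * w x
          + ((2*a) * (A x * ψ x * w x) + (a*a) * (ψ x * ψ x * w x)) := by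
      ext x; ring
    have iS : Integrable (fun x => (2*a) * (A x * ψ x * w x)
        + (a*a) * (ψ x * ψ x * w x)) volume := by
      exact (iAψ.const_mul (2*a)).add (iψψ.const_mul (a*a))
    rw [h, integral_add iAA iS,
      integral_add (iAψ.const_mul (2*a)) (iψψ.const_mul (a*a)),
      integral_const_mul, integral_const_mul]
  have expandR : ∫ x, (L x + a * ψ x) ^ 2 * w x =
      (∫ x, L x * L x * w x) + ((2*a) * (∫ x, L x * ψ x * w x)
        + (a*a) * ∫ x, ψ x * ψ x * w x) := by
    have h : (fun x => (L x + a * ψ x) ^ 2 * w x)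
        = fun x => L x * L x * w x
          + ((2*a) * (L x * ψ x * w x) + (a*a) * (ψ x * ψ x * w x)) := by
      ext x; ring
    have iS : Integrable (fun x => (2*a) * (L x * ψ x * w x)
        + (a*a) * (ψ x * ψ x * w x)) volume := by
      exact (iLψ.const_mul (2*a)).add (iψψ.const_mul (a*a))
    rw [h, integral_add iLL iS,
      integral_add (iLψ.const_mul (2*a)) (iψψ.const_mul (a*a)),
      integral_const_mul, integral_const_mul]
  have expandC : ∫ x, ψ x * (lap A x - lapAdj φ L x) * w x =
      (∫ x, ψ x * lap A x * w x) - ∫ x, ψ x * lapAdj φ L x * w x := by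
    have h : (fun x => ψ x * (lap A x - lapAdj φ L x) * w x)
        = fun x => ψ x * lap A x * w x - ψ x * lapAdj φ L x * w x := by
      ext x; ring
    rw [h, integral_sub iψlapA iψadjL]
  rw [expandL, expandR, expandC, I1, I2, I3]
  ring
end

section
/- For φ(x) = |x|², a ∈ ℝ, and every ψ ∈ C_c^∞(ℝⁿ), the coercivity estimate ‖(Δ+a)*_φ ψ‖²_φ ≥ 8n ‖ψ‖²_φ holds, where (Δ+a)*_φ ψ = e^{|x|²}Δ(ψ e^{-|x|²}) + aψ. -/
open MeasureTheory Real

namespace Stmt9Aux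

variable {n : ℕ}

local notation "E" => EuclideanSpace ℝ (Fin n)

/-- partial derivative in direction `i` -/
noncomputable def D (i : Fin n) (f : E → ℝ) : E → ℝ :=
  fun x => fderiv ℝ f x (EuclideanSpace.single i 1)

/-- the formal adjoint of `D i` with respect to the Gaussian weight -/
noncomputable def S (i : Fin n) (f : E → ℝ) : E → ℝ :=
  fun x => 2 * x i * f x - D i f x

noncomputable def w : E → ℝ := fun x => Real.exp (-‖x‖ ^ 2)

/-- smooth and compactly supported -/
def SC (f : E → ℝ) : Prop := ContDiff ℝ (⊤ : ℕ∞) f ∧ HasCompactSupport f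

/-- the Gaussian-weighted inner product -/
noncomputable def Iw (f g : E → ℝ) : ℝ := ∫ x, f x * g x * w x

lemma D_def (i : Fin n) (f : E → ℝ) (x : E) :
    D i f x = fderiv ℝ f x (EuclideanSpace.single i 1) := rfl

lemma hcs_sub {α : Type*} [TopologicalSpace α] {f g : α → ℝ} (hf : HasCompactSupport f)
    (hg : HasCompactSupport g) : HasCompactSupport (fun x => f x - g x) := by
  have hn : HasCompactSupport (fun x => -g x) :=
    HasCompactSupport.comp_left (g := fun t : ℝ => -t) hg (by simp)
  convert hf.add hn using 1
  · rfl
  · funext x; simp [sub_eq_add_neg]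

lemma contDiff_D {f : E → ℝ} (hf : ContDiff ℝ (⊤ : ℕ∞) f) (i : Fin n) :
    ContDiff ℝ (⊤ : ℕ∞) (D i f) :=
  (hf.fderiv_right (by simp)).clm_apply contDiff_const

lemma diff_of_contDiff {f : E → ℝ} (hf : ContDiff ℝ (⊤ : ℕ∞) f) (x : E) :
    DifferentiableAt ℝ f x :=
  (hf.differentiable (by simp)).differentiableAt

lemma hcs_D {f : E → ℝ} (hf : HasCompactSupport f) (i : Fin n) :
    HasCompactSupport (D i f) :=
  (hf.fderiv ℝ).comp_left (g := fun L : EuclideanSpace ℝ (Fin n) →L[ℝ] ℝ =>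
    L (EuclideanSpace.single i 1)) rfl

lemma SC.D {f : E → ℝ} (hf : SC f) (i : Fin n) : SC (Stmt9Aux.D i f) :=
  ⟨contDiff_D hf.1 i, hcs_D hf.2 i⟩

lemma contDiff_coord (j : Fin n) : ContDiff ℝ (⊤ : ℕ∞) (fun x : E => x j) :=
  (EuclideanSpace.proj (𝕜 := ℝ) j).contDiff

lemma contDiff_w : ContDiff ℝ (⊤ : ℕ∞) (w (n := n)) :=
  (contDiff_norm_sq ℝ).neg.exp

lemma w_pos (x : E) : 0 < w x := Real.exp_pos _

lemma SC.S {f : E → ℝ} (hf : SC f) (i : Fin n) : SC (Stmt9Aux.S i f) := by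
  constructor
  · exact (((contDiff_const (c := (2:ℝ))).mul (contDiff_coord i)).mul hf.1).sub
      (contDiff_D hf.1 i)
  · exact hcs_sub hf.2.mul_left (hcs_D hf.2 i)

lemma SC_sum {F : Fin n → E → ℝ} (h : ∀ i, SC (F i)) :
    SC (fun x => ∑ i, F i x) := by
  constructor
  · exact ContDiff.sum (fun i _ => (h i).1)
  · have : ∀ s : Finset (Fin n), HasCompactSupport (fun x => ∑ i ∈ s, F i x) := by
      intro s
      induction s using Finset.induction with
      | empty =>
        simp only [Finset.sum_empty]
        exact HasCompactSupport.intro isCompact_empty (fun x _ => rfl)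
      | insert _ _ hx ih =>
        simp only [Finset.sum_insert hx]
        exact ((h _).2).add ih
    exact this _

lemma D_sub {f g : E → ℝ} {x : E} (hf : DifferentiableAt ℝ f x)
    (hg : DifferentiableAt ℝ g x) (i : Fin n) :
    D i (fun y => f y - g y) x = D i f x - D i g x := by
  simp [D, fderiv_fun_sub hf hg]

lemma D_const_mul {f : E → ℝ} {x : E} (hf : DifferentiableAt ℝ f x) (c : ℝ) (i : Fin n) :
    D i (fun y => c * f y) x = c * D i f x := by
  simp [D, fderiv_const_mul hf c]

lemma D_mul {f g : E → ℝ} {x : E} (hf : DifferentiableAt ℝ f x)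
    (hg : DifferentiableAt ℝ g x) (i : Fin n) :
    D i (fun y => f y * g y) x = D i f x * g x + f x * D i g x := by
  simp only [D, fderiv_fun_mul hf hg]
  simp [mul_comm, add_comm]

lemma D_coord (i j : Fin n) (x : E) :
    D i (fun y : E => y j) x = if i = j then 1 else 0 := by
  have h : (fun y : E => y j) = (EuclideanSpace.proj (𝕜 := ℝ) j) := rfl
  rw [D, h, ContinuousLinearMap.fderiv]
  simp [EuclideanSpace.single_apply, eq_comm]

lemma normsq_eq (x : E) : ‖x‖ ^ 2 = ∑ j, x j ^ 2 := by
  rw [EuclideanSpace.norm_eq, Real.sq_sqrt (by positivity)]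
  simp [Real.norm_eq_abs, sq_abs]

lemma D_normsq (i : Fin n) (x : E) : D i (fun y : E => ‖y‖ ^ 2) x = 2 * x i := by
  have h : (fun y : E => ‖y‖ ^ 2) = fun y : E => ∑ j, y j * y j := by
    funext y; rw [normsq_eq]; simp [sq]
  rw [h]
  have hdiff : ∀ (j : Fin n) (y : E), DifferentiableAt ℝ (fun z : E => z j * z j) y :=
    fun j y => (diff_of_contDiff ((contDiff_coord j).mul (contDiff_coord j)) y)
  have hsum : D i (fun y : E => ∑ j, y j * y j) x = ∑ j, D i (fun y : E => y j * y j) x := by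
    simp only [D]
    rw [fderiv_fun_sum (fun j _ => hdiff j x)]
    simp
  rw [hsum]
  have : ∀ j, D i (fun y : E => y j * y j) x = (if i = j then 1 else 0) * x j
      + x j * (if i = j then 1 else 0) := by
    intro j
    rw [D_mul (diff_of_contDiff (contDiff_coord j) x) (diff_of_contDiff (contDiff_coord j) x),
      D_coord]
  have h2 : ∀ j, ((if i = j then (1:ℝ) else 0) * x j + x j * (if i = j then 1 else 0))
      = if i = j then 2 * x j else 0 := by
    intro j; split <;> ring
  simp only [this, h2]
  rw [Finset.sum_ite_eq]
  simp

lemma D_w (i : Fin n) (x : E) : D i (w (n := n)) x = -2 * x i * w x := by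
  have hdiff : DifferentiableAt ℝ (fun y : E => -‖y‖ ^ 2) x :=
    diff_of_contDiff (contDiff_norm_sq ℝ).neg x
  have h1 : D i (w (n := n)) x = Real.exp (-‖x‖ ^ 2) * D i (fun y : E => -‖y‖ ^ 2) x := by
    change (fderiv ℝ (fun y : E => Real.exp (-‖y‖ ^ 2)) x) _ = _
    rw [fderiv_exp hdiff]
    simp [D]
  rw [h1]
  have hneg : D i (fun y : E => -‖y‖ ^ 2) x = -(2 * x i) := by
    have h0 : (fun y : E => -‖y‖ ^ 2) = (fun y : E => (0:ℝ) - ‖y‖ ^ 2) := by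
      funext y; ring
    rw [h0, D_sub (differentiableAt_const 0) (diff_of_contDiff (contDiff_norm_sq ℝ) x),
      D_normsq]
    simp [D]
  rw [hneg]
  simp only [w]
  ring

lemma D_eq_snd {f : E → ℝ} (hf : ContDiff ℝ (⊤ : ℕ∞) f) (i : Fin n) (v : E) (x : E) :
    D i (fun y => fderiv ℝ f y v) x
      = fderiv ℝ (fderiv ℝ f) x (EuclideanSpace.single i 1) v := by
  have hc : DifferentiableAt ℝ (fderiv ℝ f) x :=
    ((hf.fderiv_right (m := 1) (WithTop.coe_le_coe.mpr le_top)).differentiable one_ne_zero).differentiableAt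
  have hder : HasFDerivAt (fun y => fderiv ℝ f y v)
      ((fderiv ℝ f x).comp (0 : EuclideanSpace ℝ (Fin n) →L[ℝ] EuclideanSpace ℝ (Fin n))
        + (fderiv ℝ (fderiv ℝ f) x).flip v) x := by
    have := hc.hasFDerivAt.clm_apply (hasFDerivAt_const v x)
    simpa using this
  rw [D_def, hder.fderiv]
  simp

lemma D_comm {f : E → ℝ} (hf : ContDiff ℝ (⊤ : ℕ∞) f) (i j : Fin n) (x : E) :
    D i (D j f) x = D j (D i f) x := by
  have hsym : IsSymmSndFDerivAt ℝ f x := hf.contDiffAt.isSymmSndFDerivAt (by rw [minSmoothness_of_isRCLikeNormedField]; exact WithTop.coe_le_coe.mpr le_top)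
  have h1 := D_eq_snd hf i (EuclideanSpace.single j 1) x
  have h2 := D_eq_snd hf j (EuclideanSpace.single i 1) x
  have e1 : D i (D j f) x = D i (fun y => fderiv ℝ f y (EuclideanSpace.single j 1)) x := rfl
  have e2 : D j (D i f) x = D j (fun y => fderiv ℝ f y (EuclideanSpace.single i 1)) x := rfl
  rw [e1, e2, h1, h2, hsym]

/-! ### Integral lemmas -/

lemma integral_D_zero {F : E → ℝ} (hF : ContDiff ℝ (⊤ : ℕ∞) F) (hFc : HasCompactSupport F)
    (i : Fin n) : ∫ x, D i F x = 0 := by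
  obtain ⟨C, hC⟩ := ContDiff.lipschitzWith_of_hasCompactSupport hFc hF (by simp)
  have key := LipschitzWith.integral_lineDeriv_mul_eq (μ := volume)
    (LipschitzWith.const (1:ℝ)) hC hFc (EuclideanSpace.single i 1)
  have h1 : ∀ x : E, lineDeriv ℝ (fun _ : E => (1:ℝ)) x (EuclideanSpace.single i 1) = 0 := by
    intro x
    rw [(differentiableAt_const (1:ℝ)).lineDeriv_eq_fderiv]
    simp
  have h2 : ∀ x : E, lineDeriv ℝ F x (-(EuclideanSpace.single i 1)) * (fun _ : E => (1:ℝ)) x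
      = -(D i F x) := by
    intro x
    rw [(diff_of_contDiff hF x).lineDeriv_eq_fderiv]
    simp [D]
  simp only [h1, h2, zero_mul, integral_zero] at key
  rw [integral_neg] at key
  linarith

lemma integrable_iw {f g : E → ℝ} (hfc : Continuous f) (hfs : HasCompactSupport f)
    (hgc : Continuous g) : Integrable (fun x => f x * g x * w x) := by
  exact Continuous.integrable_of_hasCompactSupport
    ((hfc.mul hgc).mul contDiff_w.continuous) (hfs.mul_right.mul_right)

lemma Iw_congr {f g f' g' : E → ℝ} (h : ∀ x, f x * g x * w x = f' x * g' x * w x) :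
    Iw f g = Iw f' g' :=
  integral_congr_ae (Filter.Eventually.of_forall h)

lemma Iw_symm (f g : E → ℝ) : Iw f g = Iw g f :=
  Iw_congr (fun x => by ring)

lemma Iw_nonneg (f : E → ℝ) : 0 ≤ Iw f f :=
  integral_nonneg (fun x => mul_nonneg (mul_self_nonneg _) (w_pos x).le)

/-- the fundamental integration by parts identity -/
lemma ibp {f g : E → ℝ} (hf : SC f) (hg : SC g) (i : Fin n) :
    Iw (D i f) g = Iw f (Stmt9Aux.S i g) := by
  set A : E → ℝ := fun x => D i f x * g x * w x with hA
  set B : E → ℝ := fun x => f x * D i g x * w x with hB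
  set C : E → ℝ := fun x => f x * (2 * x i * g x) * w x with hCdef
  have hiA : Integrable A := integrable_iw (contDiff_D hf.1 i).continuous (hcs_D hf.2 i)
    hg.1.continuous
  have hiB : Integrable B := integrable_iw hf.1.continuous hf.2
    (contDiff_D hg.1 i).continuous
  have hiC : Integrable C := integrable_iw hf.1.continuous hf.2
    (((contDiff_const (c := (2:ℝ))).mul (contDiff_coord i)).mul hg.1).continuous
  have hFG : SC (fun x => f x * g x * w x) :=
    ⟨(hf.1.mul hg.1).mul contDiff_w, hf.2.mul_right.mul_right⟩
  have hpt : ∀ x, D i (fun y => f y * g y * w y) x = A x + B x - C x := by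
    intro x
    have d1 : DifferentiableAt ℝ (fun y : E => f y * g y) x :=
      diff_of_contDiff (hf.1.mul hg.1) x
    have d2 : DifferentiableAt ℝ (w (n := n)) x := diff_of_contDiff contDiff_w x
    rw [show (fun y => f y * g y * w y) = (fun y => (fun z => f z * g z) y * w y) from rfl]
    rw [D_mul d1 d2 i, D_mul (diff_of_contDiff hf.1 x) (diff_of_contDiff hg.1 x) i, D_w]
    simp only [hA, hB, hCdef]
    ring
  have h0 : ∫ x, (A x + B x - C x) = 0 := by
    rw [← integral_congr_ae (Filter.Eventually.of_forall hpt)]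
    exact integral_D_zero hFG.1 hFG.2 i
  have hiAB : Integrable (fun x => A x + B x) := by exact hiA.add hiB
  rw [integral_sub hiAB hiC, integral_add hiA hiB] at h0
  have hIA : Iw (D i f) g = ∫ x, A x := rfl
  have hIS : Iw f (Stmt9Aux.S i g) = ∫ x, (C x - B x) := by
    apply integral_congr_ae (Filter.Eventually.of_forall _)
    intro x
    simp only [Stmt9Aux.S, hCdef, hB]
    ring
  rw [hIA, hIS, integral_sub hiC hiB]
  linarith

/-- integration by parts, adjoint direction -/
lemma ibp' {f g : E → ℝ} (hf : SC f) (hg : SC g) (i : Fin n) :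
    Iw (Stmt9Aux.S i f) g = Iw f (D i g) := by
  have hxf : SC (fun x : E => 2 * x i * f x) :=
    ⟨((contDiff_const (c := (2:ℝ))).mul (contDiff_coord i)).mul hf.1, hf.2.mul_left⟩
  have hiDf : Integrable (fun x => D i f x * g x * w x) :=
    integrable_iw (contDiff_D hf.1 i).continuous (hcs_D hf.2 i) hg.1.continuous
  have hixf : Integrable (fun x => (2 * x i * f x) * g x * w x) :=
    integrable_iw hxf.1.continuous hxf.2 hg.1.continuous
  have hiDg : Integrable (fun x => f x * D i g x * w x) :=
    integrable_iw hf.1.continuous hf.2 (contDiff_D hg.1 i).continuous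
  have hixg : Integrable (fun x => f x * (2 * x i * g x) * w x) :=
    integrable_iw hf.1.continuous hf.2
      (((contDiff_const (c := (2:ℝ))).mul (contDiff_coord i)).mul hg.1).continuous
  have h1 : Iw (Stmt9Aux.S i f) g
      = (∫ x, (2 * x i * f x) * g x * w x) - ∫ x, D i f x * g x * w x := by
    rw [← integral_sub hixf hiDf]
    apply integral_congr_ae (Filter.Eventually.of_forall _)
    intro x
    simp only [Stmt9Aux.S]
    ring
  have h2 : (∫ x, D i f x * g x * w x) = Iw f (Stmt9Aux.S i g) := ibp hf hg i
  have h3 : Iw f (Stmt9Aux.S i g)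
      = (∫ x, f x * (2 * x i * g x) * w x) - ∫ x, f x * D i g x * w x := by
    rw [← integral_sub hixg hiDg]
    apply integral_congr_ae (Filter.Eventually.of_forall _)
    intro x
    simp only [Stmt9Aux.S]
    ring
  have h4 : (∫ x, (2 * x i * f x) * g x * w x) = ∫ x, f x * (2 * x i * g x) * w x := by
    apply integral_congr_ae (Filter.Eventually.of_forall _)
    intro x; ring
  rw [h1, h2, h3, h4]
  simp only [Iw]
  ring

/-- commutator: `[D i, S j] = 2 δᵢⱼ` -/
lemma D_S_comm {g : E → ℝ} (hg : ContDiff ℝ (⊤ : ℕ∞) g) (i j : Fin n) (x : E) :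
    D i (Stmt9Aux.S j g) x = Stmt9Aux.S j (D i g) x + (if i = j then 2 else 0) * g x := by
  have d1 : DifferentiableAt ℝ (fun y : E => 2 * y j * g y) x :=
    diff_of_contDiff (((contDiff_const (c := (2:ℝ))).mul (contDiff_coord j)).mul hg) x
  have d2 : DifferentiableAt ℝ (D j g) x := diff_of_contDiff (contDiff_D hg j) x
  have e1 : D i (Stmt9Aux.S j g) x
      = D i (fun y => (fun z : E => 2 * z j * g z) y - D j g y) x := rfl
  rw [e1, D_sub d1 d2 i]
  have e2 : D i (fun z : E => 2 * z j * g z) x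
      = D i (fun z : E => (fun y : E => 2 * y j) z * g z) x := rfl
  have d3 : DifferentiableAt ℝ (fun y : E => 2 * y j) x :=
    diff_of_contDiff ((contDiff_const (c := (2:ℝ))).mul (contDiff_coord j)) x
  rw [e2, D_mul d3 (diff_of_contDiff hg x) i]
  have e3 : D i (fun y : E => 2 * y j) x = 2 * (if i = j then 1 else 0) := by
    rw [D_const_mul (diff_of_contDiff (contDiff_coord j) x) 2 i, D_coord]
  rw [e3, D_comm hg i j x]
  simp only [Stmt9Aux.S]
  split <;> ring

/-- `Iw f (u + c • v) = Iw f u + c * Iw f v` -/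
lemma Iw_add_mul_right {f u v : E → ℝ} (hf : SC f) (hu : Continuous u)
    (hv : Continuous v) (c : ℝ) :
    Iw f (fun x => u x + c * v x) = Iw f u + c * Iw f v := by
  have hiu : Integrable (fun x => f x * u x * w x) := integrable_iw hf.1.continuous hf.2 hu
  have hiv : Integrable (fun x => f x * v x * w x) := integrable_iw hf.1.continuous hf.2 hv
  have h1 : Iw f (fun x => u x + c * v x)
      = ∫ x, (f x * u x * w x + c * (f x * v x * w x)) := by
    apply integral_congr_ae (Filter.Eventually.of_forall _)
    intro x; ring
  rw [h1, integral_add hiu (hiv.const_mul c), integral_const_mul]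
  rfl

/-- moving both adjoints across, with commutator term -/
lemma key_M {f g : E → ℝ} (hf : SC f) (hg : SC g) (i j : Fin n) :
    Iw (Stmt9Aux.S i f) (Stmt9Aux.S j g)
      = Iw (D j f) (D i g) + (if i = j then 2 else 0) * Iw f g := by
  rw [ibp' hf (hg.S j) i]
  have h1 : Iw f (D i (Stmt9Aux.S j g))
      = Iw f (fun x => Stmt9Aux.S j (D i g) x + (if i = j then 2 else 0) * g x) := by
    apply Iw_congr; intro x
    rw [D_S_comm hg.1 i j x]
  rw [h1, Iw_add_mul_right hf (((hg.D i).S j).1.continuous) hg.1.continuous]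
  rw [← ibp hf (hg.D i) j]

lemma Iw_sum_left {F : Fin n → E → ℝ} (hF : ∀ i, SC (F i)) {g : E → ℝ}
    (hg : Continuous g) :
    Iw (fun x => ∑ i, F i x) g = ∑ i, Iw (F i) g := by
  have h1 : Iw (fun x => ∑ i, F i x) g = ∫ x, ∑ i, (F i x * g x * w x) := by
    apply integral_congr_ae (Filter.Eventually.of_forall _)
    intro x
    rw [Finset.sum_mul, Finset.sum_mul]
  rw [h1, integral_finset_sum _ (fun i _ => integrable_iw (hF i).1.continuous (hF i).2 hg)]
  rfl

lemma Iw_sum_right {F : Fin n → E → ℝ} (hF : ∀ i, SC (F i)) {g : E → ℝ}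
    (hg : Continuous g) :
    Iw g (fun x => ∑ i, F i x) = ∑ i, Iw g (F i) := by
  rw [Iw_symm, Iw_sum_left hF hg]
  exact Finset.sum_congr rfl (fun i _ => Iw_symm _ _)

lemma Iw_add_mul_left {u v g : E → ℝ} (hu : SC u) (hv : SC v) (hg : Continuous g) (c : ℝ) :
    Iw (fun x => u x + c * v x) g = Iw u g + c * Iw v g := by
  have hiu : Integrable (fun x => u x * g x * w x) := integrable_iw hu.1.continuous hu.2 hg
  have hiv : Integrable (fun x => v x * g x * w x) := integrable_iw hv.1.continuous hv.2 hg
  have h1 : Iw (fun x => u x + c * v x) g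
      = ∫ x, (u x * g x * w x + c * (v x * g x * w x)) := by
    apply integral_congr_ae (Filter.Eventually.of_forall _)
    intro x; ring
  rw [h1, integral_add hiu (hiv.const_mul c), integral_const_mul]
  rfl

lemma hcs_const_mul {f : E → ℝ} (hf : HasCompactSupport f) (c : ℝ) :
    HasCompactSupport (fun x => c * f x) :=
  HasCompactSupport.comp_left (g := fun t : ℝ => c * t) hf (by simp)

lemma lapAdj_eq {ψ : E → ℝ} (hψ : ContDiff ℝ (⊤ : ℕ∞) ψ) (x : E) :
    lapAdj (fun y => ‖y‖ ^ 2) ψ x = ∑ i, Stmt9Aux.S i (Stmt9Aux.S i ψ) x := by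
  have hexp : Real.exp (‖x‖ ^ 2) * w x = 1 := by
    rw [show w x = Real.exp (-‖x‖ ^ 2) from rfl, ← Real.exp_add]
    simp
  have hterm : ∀ i : Fin n, D i (D i (fun y => ψ y * w y)) x
      = (D i (D i ψ) x - 4 * x i * D i ψ x + (4 * x i ^ 2 - 2) * ψ x) * w x := by
    intro i
    have h1 : D i (fun y => ψ y * w y) = fun z => (D i ψ z - 2 * z i * ψ z) * w z := by
      funext z
      rw [D_mul (diff_of_contDiff hψ z) (diff_of_contDiff contDiff_w z) i, D_w]
      ring
    rw [show D i (D i (fun y => ψ y * w y)) x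
        = D i (fun z => D i (fun y => ψ y * w y) z) x from rfl]
    simp only [h1]
    have hg : ContDiff ℝ (⊤ : ℕ∞) (fun z : E => D i ψ z - 2 * z i * ψ z) :=
      (contDiff_D hψ i).sub (((contDiff_const (c := (2:ℝ))).mul (contDiff_coord i)).mul hψ)
    rw [D_mul (diff_of_contDiff hg x) (diff_of_contDiff contDiff_w x) i, D_w]
    have h2 : D i (fun z : E => D i ψ z - 2 * z i * ψ z) x
        = D i (D i ψ) x - (2 * ψ x + 2 * x i * D i ψ x) := by
      have d1 : DifferentiableAt ℝ (D i ψ) x := diff_of_contDiff (contDiff_D hψ i) x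
      have d2 : DifferentiableAt ℝ (fun z : E => 2 * z i * ψ z) x :=
        diff_of_contDiff (((contDiff_const (c := (2:ℝ))).mul (contDiff_coord i)).mul hψ) x
      rw [show (fun z : E => D i ψ z - 2 * z i * ψ z)
          = (fun z : E => D i ψ z - (fun y : E => 2 * y i * ψ y) z) from rfl]
      rw [D_sub d1 d2 i]
      congr 1
      rw [show (fun y : E => 2 * y i * ψ y)
          = (fun y : E => (fun z : E => 2 * z i) y * ψ y) from rfl]
      rw [D_mul (diff_of_contDiff ((contDiff_const (c := (2:ℝ))).mul (contDiff_coord i)) x)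
        (diff_of_contDiff hψ x) i]
      have h3 : D i (fun z : E => 2 * z i) x = 2 := by
        rw [D_const_mul (diff_of_contDiff (contDiff_coord i) x) 2 i, D_coord, if_pos rfl]
        ring
      rw [h3]
    rw [h2]
    ring
  show Real.exp (‖x‖ ^ 2) * lap (fun y => ψ y * Real.exp (-(‖y‖ ^ 2))) x = _
  have hlam : (fun y : EuclideanSpace ℝ (Fin n) => ψ y * Real.exp (-(‖y‖ ^ 2)))
      = fun y => ψ y * w y := rfl
  rw [hlam]
  have hlap : lap (fun y : EuclideanSpace ℝ (Fin n) => ψ y * w y) x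
      = ∑ i, D i (D i (fun y : EuclideanSpace ℝ (Fin n) => ψ y * w y)) x := rfl
  rw [hlap, Finset.mul_sum]
  apply Finset.sum_congr rfl
  intro i _
  rw [hterm i]
  have hSS : Stmt9Aux.S i (Stmt9Aux.S i ψ) x
      = D i (D i ψ) x - 4 * x i * D i ψ x + (4 * x i ^ 2 - 2) * ψ x := by
    have e : Stmt9Aux.S i (Stmt9Aux.S i ψ) x
        = 2 * x i * (Stmt9Aux.S i ψ x) - D i (Stmt9Aux.S i ψ) x := rfl
    have hc := D_S_comm hψ i i x
    rw [if_pos rfl] at hc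
    rw [e, hc]
    simp only [Stmt9Aux.S]
    ring
  rw [hSS]
  calc Real.exp (‖x‖ ^ 2)
        * ((D i (D i ψ) x - 4 * x i * D i ψ x + (4 * x i ^ 2 - 2) * ψ x) * w x)
      = (D i (D i ψ) x - 4 * x i * D i ψ x + (4 * x i ^ 2 - 2) * ψ x)
        * (Real.exp (‖x‖ ^ 2) * w x) := by ring
    _ = D i (D i ψ) x - 4 * x i * D i ψ x + (4 * x i ^ 2 - 2) * ψ x := by
        rw [hexp]; ring

end Stmt9Aux

open Stmt9Aux

theorem stmt9 (n : ℕ) (a : ℝ) (ψ : EuclideanSpace ℝ (Fin n) → ℝ)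
    (hψ : ContDiff ℝ (⊤ : ℕ∞) ψ) (hψc : HasCompactSupport ψ) :
    ∫ x, (lapAdj (fun y => ‖y‖ ^ 2) ψ x + a * ψ x) ^ 2 * Real.exp (-‖x‖ ^ 2) ≥
      8 * n * ∫ x, ψ x ^ 2 * Real.exp (-‖x‖ ^ 2) := by
  classical
  have hψSC : SC ψ := ⟨hψ, hψc⟩
  set Dψ : Fin n → EuclideanSpace ℝ (Fin n) → ℝ := fun i => D i ψ with hDψdef
  set DD : Fin n → EuclideanSpace ℝ (Fin n) → ℝ := fun i => D i (D i ψ) with hDDdef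
  set SS : Fin n → EuclideanSpace ℝ (Fin n) → ℝ := fun i => S i (S i ψ) with hSSdef
  have hDψ : ∀ i, SC (Dψ i) := fun i => hψSC.D i
  have hDD : ∀ i, SC (DD i) := fun i => (hψSC.D i).D i
  have hSS : ∀ i, SC (SS i) := fun i => (hψSC.S i).S i
  -- Claim A : ⟨Sᵢ²ψ, ψ⟩ = ⟨Dᵢ²ψ, ψ⟩
  have claimA : ∀ i, Iw (SS i) ψ = Iw (DD i) ψ := by
    intro i
    calc Iw (SS i) ψ = Iw (S i ψ) (D i ψ) := ibp' (hψSC.S i) hψSC i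
      _ = Iw ψ (D i (D i ψ)) := ibp' hψSC (hψSC.D i) i
      _ = Iw (DD i) ψ := Iw_symm _ _
  -- Claim B : ⟨Sᵢ²ψ, Sⱼ²ψ⟩ = ⟨Dⱼ²ψ, Dᵢ²ψ⟩ + δᵢⱼ (8⟨Dᵢψ,Dⱼψ⟩ + 8⟨ψ,ψ⟩)
  have claimB : ∀ i j, Iw (SS i) (SS j) = Iw (DD j) (DD i)
      + (if i = j then (8:ℝ) else 0) * Iw (Dψ j) (Dψ i)
      + (if i = j then (8:ℝ) else 0) * Iw ψ ψ := by
    intro i j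
    set c : ℝ := if i = j then 2 else 0 with hc
    have hM1 : Iw (SS i) (SS j) = Iw (D j (S i ψ)) (D i (S j ψ)) + c * Iw (S i ψ) (S j ψ) :=
      key_M (hψSC.S i) (hψSC.S j) i j
    have hcomm1 : D j (S i ψ) = fun x => S i (Dψ j) x + c * ψ x := by
      funext x
      rw [D_S_comm hψ j i x]
      have : (if j = i then (2:ℝ) else 0) = c := by simp [hc, eq_comm]
      rw [this]
    have hcomm2 : D i (S j ψ) = fun x => S j (Dψ i) x + c * ψ x := by
      funext x
      rw [D_S_comm hψ i j x]
    have hSCu : SC (S i (Dψ j)) := (hDψ j).S i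
    have hSCv : SC (S j (Dψ i)) := (hDψ i).S j
    have hSCucψ : SC (fun x => S i (Dψ j) x + c * ψ x) :=
      ⟨hSCu.1.add (contDiff_const.mul hψ), hSCu.2.add (hcs_const_mul hψc c)⟩
    have hexp : Iw (D j (S i ψ)) (D i (S j ψ))
        = Iw (S i (Dψ j)) (S j (Dψ i)) + c * Iw (S i (Dψ j)) ψ
          + c * Iw ψ (S j (Dψ i)) + c * c * Iw ψ ψ := by
      rw [hcomm1, hcomm2]
      rw [Iw_add_mul_right hSCucψ hSCv.1.continuous hψ.continuous c]
      rw [Iw_add_mul_left hSCu hψSC (hSCv.1.continuous) c,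
        Iw_add_mul_left hSCu hψSC hψ.continuous c]
      ring
    have hM2 : Iw (S i (Dψ j)) (S j (Dψ i))
        = Iw (DD j) (DD i) + c * Iw (Dψ j) (Dψ i) := by
      have := key_M (hDψ j) (hDψ i) i j
      rw [this]
    have hM3 : Iw (S i (Dψ j)) ψ = Iw (Dψ j) (Dψ i) := ibp' (hDψ j) hψSC i
    have hM4 : Iw ψ (S j (Dψ i)) = Iw (Dψ j) (Dψ i) := (ibp hψSC (hDψ i) j).symm
    have hM5 : Iw (S i ψ) (S j ψ) = Iw (Dψ j) (Dψ i) + c * Iw ψ ψ := key_M hψSC hψSC i j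
    rw [hM1, hexp, hM2, hM3, hM4, hM5]
    by_cases h : i = j <;> simp [hc, h] <;> ring
  -- expansion of the square
  have expand : ∀ F : EuclideanSpace ℝ (Fin n) → ℝ, SC F →
      Iw (fun x => F x + a * ψ x) (fun x => F x + a * ψ x)
        = Iw F F + 2 * a * Iw F ψ + a ^ 2 * Iw ψ ψ := by
    intro F hF
    have hFa : SC (fun x => F x + a * ψ x) :=
      ⟨hF.1.add (contDiff_const.mul hψ), hF.2.add (hcs_const_mul hψc a)⟩
    have e0 : Iw (fun x => F x + a * ψ x) (fun x => F x + a * ψ x)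
        = Iw (fun x => F x + a * ψ x) F + a * Iw (fun x => F x + a * ψ x) ψ :=
      Iw_add_mul_right hFa hF.1.continuous hψ.continuous a
    have e1 : Iw (fun x => F x + a * ψ x) F = Iw F F + a * Iw ψ F :=
      Iw_add_mul_left hF hψSC hF.1.continuous a
    have e2 : Iw (fun x => F x + a * ψ x) ψ = Iw F ψ + a * Iw ψ ψ :=
      Iw_add_mul_left hF hψSC hψ.continuous a
    have e3 : Iw ψ F = Iw F ψ := Iw_symm _ _
    rw [e0, e1, e2, e3]
    ring
  set T : EuclideanSpace ℝ (Fin n) → ℝ := fun x => ∑ i, SS i x with hTdef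
  set P : EuclideanSpace ℝ (Fin n) → ℝ := fun x => ∑ i, DD i x with hPdef
  have hT : SC T := SC_sum hSS
  have hP : SC P := SC_sum hDD
  have hTT : Iw T T = ∑ i, ∑ j, Iw (SS i) (SS j) := by
    rw [hTdef, Iw_sum_left hSS hT.1.continuous]
    exact Finset.sum_congr rfl fun i _ => Iw_sum_right hSS (hSS i).1.continuous
  have hPP : Iw P P = ∑ i, ∑ j, Iw (DD i) (DD j) := by
    rw [hPdef, Iw_sum_left hDD hP.1.continuous]
    exact Finset.sum_congr rfl fun i _ => Iw_sum_right hDD (hDD i).1.continuous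
  have hTψ : Iw T ψ = ∑ i, Iw (SS i) ψ := Iw_sum_left hSS hψ.continuous
  have hPψ : Iw P ψ = ∑ i, Iw (DD i) ψ := Iw_sum_left hDD hψ.continuous
  have hsum1 : ∑ i, ∑ j, Iw (SS i) (SS j)
      = (∑ i, ∑ j, Iw (DD i) (DD j)) + 8 * (∑ i, Iw (Dψ i) (Dψ i))
        + 8 * n * Iw ψ ψ := by
    have h1 : ∀ i j, Iw (SS i) (SS j) = Iw (DD j) (DD i)
        + ((if i = j then (8:ℝ) else 0) * Iw (Dψ j) (Dψ i)
        + (if i = j then (8:ℝ) else 0) * Iw ψ ψ) := by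
      intro i j; rw [claimB i j]; ring
    have hif : ∀ (i j : Fin n) (Q : Fin n → ℝ),
        (if i = j then (8:ℝ) else 0) * Q j = if i = j then 8 * Q j else 0 := by
      intro i j Q; split <;> simp
    have h2 : ∀ i, ∑ j, Iw (SS i) (SS j)
        = (∑ j, Iw (DD j) (DD i)) + (8 * Iw (Dψ i) (Dψ i) + 8 * Iw ψ ψ) := by
      intro i
      rw [Finset.sum_congr rfl (fun j _ => h1 i j), Finset.sum_add_distrib]
      congr 1
      rw [Finset.sum_add_distrib]
      congr 1
      · rw [Finset.sum_congr rfl (fun j _ => hif i j (fun j => Iw (Dψ j) (Dψ i))),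
          Finset.sum_ite_eq]
        simp
      · rw [Finset.sum_congr rfl (fun j _ => hif i j (fun _ => Iw ψ ψ)),
          Finset.sum_ite_eq]
        simp
    rw [Finset.sum_congr rfl (fun i _ => h2 i), Finset.sum_add_distrib,
      Finset.sum_add_distrib, Finset.sum_comm, ← Finset.mul_sum, ← Finset.mul_sum,
      Finset.sum_const, Finset.card_univ, Fintype.card_fin, nsmul_eq_mul]
    ring
  have main : Iw (fun x => T x + a * ψ x) (fun x => T x + a * ψ x)
      = Iw (fun x => P x + a * ψ x) (fun x => P x + a * ψ x)
        + 8 * (∑ i, Iw (Dψ i) (Dψ i)) + 8 * n * Iw ψ ψ := by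
    rw [expand T hT, expand P hP, hTT, hPP, hTψ, hPψ, hsum1]
    have hA : ∑ i, Iw (SS i) ψ = ∑ i, Iw (DD i) ψ :=
      Finset.sum_congr rfl fun i _ => claimA i
    rw [hA]
    ring
  have hL : ∫ x, (lapAdj (fun y => ‖y‖ ^ 2) ψ x + a * ψ x) ^ 2 * Real.exp (-‖x‖ ^ 2)
      = Iw (fun x => T x + a * ψ x) (fun x => T x + a * ψ x) := by
    apply integral_congr_ae (Filter.Eventually.of_forall _)
    intro x
    rw [lapAdj_eq hψ x, hTdef]
    simp only [hSSdef, w]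
    ring
  have hR : ∫ x, ψ x ^ 2 * Real.exp (-‖x‖ ^ 2) = Iw ψ ψ := by
    apply integral_congr_ae (Filter.Eventually.of_forall _)
    intro x
    simp only [w]
    ring
  rw [ge_iff_le, hL, hR, main]
  have h8 : 0 ≤ 8 * ∑ i, Iw (Dψ i) (Dψ i) := by
    have := Finset.sum_nonneg (fun i (_ : i ∈ Finset.univ) => Iw_nonneg (Dψ i))
    linarith
  have hPa : 0 ≤ Iw (fun x => P x + a * ψ x) (fun x => P x + a * ψ x) := Iw_nonneg _
  linarith
end
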